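/- Let (P, C, ψ) be an entwining structure with P ∈ M_P^C(ψ) (right P-action by multiplication, coaction Δ_P). Then the map Δ_{P⊗P} : P ⊗ P → P ⊗ P ⊗ C, p ⊗ p' ↦ p₍₀₎ ⊗ ψ(p₍₁₎ ⊗ p'), is a right C-coaction on P ⊗ P, and it restricts to a right C-coaction Δ_{Ω¹P} : Ω¹P → Ω¹P ⊗ C on the space Ω¹P of universal differential 1-forms. -/
import Mathlib


/-!
STATEMENT 17. For an entwining structure (P, C, ψ) with P ∈ M_P^C(ψ), the map
Δ_{P⊗P} : p ⊗ p' ↦ p₍₀₎ ⊗ ψ(p₍₁₎ ⊗ p') is a right C-coaction on P ⊗ P, and it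
restricts to a coaction on Ω¹P = Ker(P ⊗ P → P).
-/

open TensorProduct LinearMap

noncomputable section

namespace CGal

variable {k : Type*} [Field k]
variable {P C : Type*} [Ring P] [Algebra k P]
  [AddCommGroup C] [Module k C] [Coalgebra k C]

/-- `δ` is a (counital, coassociative) right `C`-coaction on `P`. -/
def IsCoaction (δ : P →ₗ[k] P ⊗[k] C) : Prop :=
  (∀ p : P, (TensorProduct.rid k P) ((lTensor P (Coalgebra.counit : C →ₗ[k] k)) (δ p)) = p) ∧
  (∀ p : P, (rTensor C δ) (δ p)
      = (TensorProduct.assoc k P C C).symm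
          ((lTensor P (Coalgebra.comul : C →ₗ[k] C ⊗[k] C)) (δ p)))

/-- Comodule axioms for a right `C`-coaction on a `k`-module `M`. -/
def IsCoactionOn {M : Type*} [AddCommGroup M] [Module k M]
    (ρ : M →ₗ[k] M ⊗[k] C) : Prop :=
  (∀ m : M, (TensorProduct.rid k M) ((lTensor M (Coalgebra.counit : C →ₗ[k] k)) (ρ m)) = m) ∧
  (∀ m : M, (rTensor C ρ) (ρ m)
      = (TensorProduct.assoc k M C C).symm
          ((lTensor M (Coalgebra.comul : C →ₗ[k] C ⊗[k] C)) (ρ m)))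

/-- The bow-tie axioms of an entwining structure `(P, C, ψ)`. -/
def IsEntwining (ψ : C ⊗[k] P →ₗ[k] P ⊗[k] C) : Prop :=
  (ψ ∘ₗ (lTensor C (LinearMap.mul' k P))
     = (rTensor C (LinearMap.mul' k P))
        ∘ₗ (TensorProduct.assoc k P P C).symm.toLinearMap
        ∘ₗ (lTensor P ψ)
        ∘ₗ (TensorProduct.assoc k P C P).toLinearMap
        ∘ₗ (rTensor P ψ)
        ∘ₗ (TensorProduct.assoc k C P P).symm.toLinearMap) ∧
  (∀ c : C, ψ (c ⊗ₜ[k] (1 : P)) = (1 : P) ⊗ₜ[k] c) ∧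
  ((lTensor P (Coalgebra.comul : C →ₗ[k] C ⊗[k] C)) ∘ₗ ψ
     = (TensorProduct.assoc k P C C).toLinearMap
        ∘ₗ (rTensor C ψ)
        ∘ₗ (TensorProduct.assoc k C P C).symm.toLinearMap
        ∘ₗ (lTensor C ψ)
        ∘ₗ (TensorProduct.assoc k C C P).toLinearMap
        ∘ₗ (rTensor P (Coalgebra.comul : C →ₗ[k] C ⊗[k] C))) ∧
  ((TensorProduct.rid k P).toLinearMap
      ∘ₗ (lTensor P (Coalgebra.counit : C →ₗ[k] k)) ∘ₗ ψ
     = (TensorProduct.lid k P).toLinearMap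
      ∘ₗ (rTensor P (Coalgebra.counit : C →ₗ[k] k)))

/-- `P` is an entwined module in `M_P^C(ψ)`. -/
def IsEntwinedOn (δ : P →ₗ[k] P ⊗[k] C) (ψ : C ⊗[k] P →ₗ[k] P ⊗[k] C) : Prop :=
  ∀ m p : P,
    δ (m * p)
      = ((rTensor C (LinearMap.mul' k P))
          ∘ₗ (TensorProduct.assoc k P P C).symm.toLinearMap
          ∘ₗ (lTensor P ψ)
          ∘ₗ (TensorProduct.assoc k P C P).toLinearMap)
        ((δ m) ⊗ₜ[k] p)

/-- The diagonal coaction `Δ_{P⊗P} : p ⊗ p' ↦ p₍₀₎ ⊗ ψ(p₍₁₎ ⊗ p')`. -/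
def deltaPP (δ : P →ₗ[k] P ⊗[k] C) (ψ : C ⊗[k] P →ₗ[k] P ⊗[k] C) :
    P ⊗[k] P →ₗ[k] (P ⊗[k] P) ⊗[k] C :=
  (TensorProduct.assoc k P P C).symm.toLinearMap
    ∘ₗ (lTensor P ψ)
    ∘ₗ (TensorProduct.assoc k P C P).toLinearMap
    ∘ₗ (rTensor P δ)

section Aux

set_option linter.unusedSectionVars false
set_option synthInstance.maxHeartbeats 1000000
set_option maxHeartbeats 1000000

variable (ψ : C ⊗[k] P →ₗ[k] P ⊗[k] C) (δ : P →ₗ[k] P ⊗[k] C)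

/-- `ψ` acting on the middle-right part, identity on the leftmost `P`. -/
def Theta : (P ⊗[k] C) ⊗[k] P →ₗ[k] (P ⊗[k] P) ⊗[k] C :=
  (TensorProduct.assoc k P P C).symm.toLinearMap
    ∘ₗ lTensor P ψ ∘ₗ (TensorProduct.assoc k P C P).toLinearMap

@[simp] lemma Theta_tmul (a : P) (c : C) (x : P) :
    Theta ψ ((a ⊗ₜ[k] c) ⊗ₜ[k] x)
      = (TensorProduct.assoc k P P C).symm (a ⊗ₜ[k] ψ (c ⊗ₜ[k] x)) := by
  simp [Theta]

/-- `ψ` acting on the last two slots, identity on the leftmost `P ⊗ C`. -/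
def Theta' : ((P ⊗[k] C) ⊗[k] C) ⊗[k] P →ₗ[k] ((P ⊗[k] C) ⊗[k] P) ⊗[k] C :=
  (TensorProduct.assoc k (P ⊗[k] C) P C).symm.toLinearMap
    ∘ₗ lTensor (P ⊗[k] C) ψ ∘ₗ (TensorProduct.assoc k (P ⊗[k] C) C P).toLinearMap

lemma aux1 (a : P) (u : P ⊗[k] C) :
    rTensor C (rTensor P δ) ((TensorProduct.assoc k P P C).symm (a ⊗ₜ[k] u))
      = (TensorProduct.assoc k (P ⊗[k] C) P C).symm (δ a ⊗ₜ[k] u) := by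
  induction u using TensorProduct.induction_on with
  | zero => simp
  | tmul y d => simp
  | add u v hu hv => simp [tmul_add, hu, hv]

lemma natN :
    rTensor C (rTensor P δ) ∘ₗ Theta ψ
      = Theta' ψ ∘ₗ rTensor P (rTensor C δ) := by
  apply TensorProduct.ext_threefold
  intro a c x
  simp [Theta, Theta', aux1]

lemma aux3 (a : P) (u : P ⊗[k] C) :
    lTensor (P ⊗[k] P) (Coalgebra.comul (R := k))
        ((TensorProduct.assoc k P P C).symm (a ⊗ₜ[k] u))
      = (TensorProduct.assoc k P P (C ⊗[k] C)).symm
          (a ⊗ₜ[k] (lTensor P (Coalgebra.comul (R := k)) u)) := by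
  induction u using TensorProduct.induction_on with
  | zero => simp
  | tmul y d => simp
  | add u v hu hv => simp [tmul_add, hu, hv]

lemma aux4 (a : P) (v : P ⊗[k] (C ⊗[k] C)) :
    (TensorProduct.assoc k (P ⊗[k] P) C C).symm
        ((TensorProduct.assoc k P P (C ⊗[k] C)).symm (a ⊗ₜ[k] v))
      = rTensor C (TensorProduct.assoc k P P C).symm.toLinearMap
          ((TensorProduct.assoc k P (P ⊗[k] C) C).symm
            (a ⊗ₜ[k] ((TensorProduct.assoc k P C C).symm v))) := by
  induction v using TensorProduct.induction_on with
  | zero => simp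
  | add u v hu hv => simp only [tmul_add, map_add, hu, hv]
  | tmul y w =>
    induction w using TensorProduct.induction_on with
    | zero => simp
    | add u v hu hv => simp only [tmul_add, map_add, hu, hv]
    | tmul d e => simp

lemma aux5a (a : P) (c : C) (u : P ⊗[k] C) :
    (TensorProduct.assoc k (P ⊗[k] C) P C).symm ((a ⊗ₜ[k] c) ⊗ₜ[k] u)
      = rTensor C (TensorProduct.assoc k P C P).symm.toLinearMap
          ((TensorProduct.assoc k P (C ⊗[k] P) C).symm
            (a ⊗ₜ[k] ((TensorProduct.assoc k C P C).symm (c ⊗ₜ[k] u)))) := by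
  induction u using TensorProduct.induction_on with
  | zero => simp
  | tmul y d => simp
  | add u v hu hv => simp [tmul_add, hu, hv]

lemma aux5 (a : P) (r : C ⊗[k] C) (x : P) :
    Theta' ψ (((TensorProduct.assoc k P C C).symm (a ⊗ₜ[k] r)) ⊗ₜ[k] x)
      = rTensor C (TensorProduct.assoc k P C P).symm.toLinearMap
          ((TensorProduct.assoc k P (C ⊗[k] P) C).symm
            (a ⊗ₜ[k]
              ((TensorProduct.assoc k C P C).symm
                (lTensor C ψ ((TensorProduct.assoc k C C P) (r ⊗ₜ[k] x)))))) := by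
  induction r using TensorProduct.induction_on with
  | zero => simp
  | tmul c e => simp [Theta', aux5a]
  | add u v hu hv => simp [tmul_add, add_tmul, hu, hv]

lemma auxM6 (a : P) (q : C ⊗[k] (P ⊗[k] C)) :
    rTensor C (Theta ψ)
        (rTensor C (TensorProduct.assoc k P C P).symm.toLinearMap
          ((TensorProduct.assoc k P (C ⊗[k] P) C).symm
            (a ⊗ₜ[k] ((TensorProduct.assoc k C P C).symm q))))
      = rTensor C (TensorProduct.assoc k P P C).symm.toLinearMap
          ((TensorProduct.assoc k P (P ⊗[k] C) C).symm
            (a ⊗ₜ[k] (rTensor C ψ ((TensorProduct.assoc k C P C).symm q)))) := by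
  induction q using TensorProduct.induction_on with
  | zero => simp
  | add u v hu hv => simp only [map_add, tmul_add, hu, hv]
  | tmul c w =>
    induction w using TensorProduct.induction_on with
    | zero => simp
    | add u v hu hv => simp only [map_add, tmul_add, hu, hv]
    | tmul y d => simp

lemma mapS
    (h3 : lTensor P (Coalgebra.comul : C →ₗ[k] C ⊗[k] C) ∘ₗ ψ
      = (TensorProduct.assoc k P C C).toLinearMap
          ∘ₗ (rTensor C ψ)
          ∘ₗ (TensorProduct.assoc k C P C).symm.toLinearMap
          ∘ₗ (lTensor C ψ)
          ∘ₗ (TensorProduct.assoc k C C P).toLinearMap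
          ∘ₗ (rTensor P (Coalgebra.comul : C →ₗ[k] C ⊗[k] C))) :
    rTensor C (Theta ψ) ∘ₗ Theta' ψ
        ∘ₗ rTensor P ((TensorProduct.assoc k P C C).symm.toLinearMap
            ∘ₗ lTensor P (Coalgebra.comul : C →ₗ[k] C ⊗[k] C))
      = (TensorProduct.assoc k (P ⊗[k] P) C C).symm.toLinearMap
          ∘ₗ lTensor (P ⊗[k] P) (Coalgebra.comul : C →ₗ[k] C ⊗[k] C) ∘ₗ Theta ψ := by
  apply TensorProduct.ext_threefold
  intro a c x
  have h3' := LinearMap.congr_fun h3 (c ⊗ₜ[k] x)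
  simp only [coe_comp, LinearEquiv.coe_coe, Function.comp_apply, rTensor_tmul,
    lTensor_tmul] at h3' ⊢
  rw [Theta_tmul, aux5, auxM6, aux3, aux4, h3', LinearEquiv.symm_apply_apply]

lemma deltaPP_eq : deltaPP δ ψ = Theta ψ ∘ₗ rTensor P δ := rfl

lemma aux_c1 (a : P) (u : P ⊗[k] C) :
    (TensorProduct.rid k (P ⊗[k] P))
        (lTensor (P ⊗[k] P) (Coalgebra.counit : C →ₗ[k] k)
          ((TensorProduct.assoc k P P C).symm (a ⊗ₜ[k] u)))
      = a ⊗ₜ[k] ((TensorProduct.rid k P) (lTensor P (Coalgebra.counit : C →ₗ[k] k) u)) := by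
  induction u using TensorProduct.induction_on with
  | zero => simp
  | tmul y d => simp [tmul_smul, smul_tmul']
  | add u v hu hv => simp [tmul_add, hu, hv]

lemma mapC2
    (h4 : (TensorProduct.rid k P).toLinearMap
        ∘ₗ (lTensor P (Coalgebra.counit : C →ₗ[k] k)) ∘ₗ ψ
      = (TensorProduct.lid k P).toLinearMap
        ∘ₗ (rTensor P (Coalgebra.counit : C →ₗ[k] k))) :
    (TensorProduct.rid k (P ⊗[k] P)).toLinearMap
        ∘ₗ lTensor (P ⊗[k] P) (Coalgebra.counit : C →ₗ[k] k) ∘ₗ Theta ψ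
      = rTensor P ((TensorProduct.rid k P).toLinearMap
          ∘ₗ lTensor P (Coalgebra.counit : C →ₗ[k] k)) := by
  apply TensorProduct.ext_threefold
  intro a c x
  have h4' := LinearMap.congr_fun h4 (c ⊗ₜ[k] x)
  simp only [coe_comp, LinearEquiv.coe_coe, Function.comp_apply, rTensor_tmul,
    lTensor_tmul, Theta_tmul] at h4' ⊢
  rw [aux_c1, h4']
  simp [tmul_smul, smul_tmul', TensorProduct.lid_tmul]

end Aux

set_option maxHeartbeats 1000000 in
theorem diagonal_coaction_and_restriction
    (ψ : C ⊗[k] P →ₗ[k] P ⊗[k] C) (hψ : IsEntwining ψ)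
    (δ : P →ₗ[k] P ⊗[k] C) (hδ : IsCoaction δ) (hent : IsEntwinedOn δ ψ) :
    IsCoactionOn (deltaPP δ ψ) ∧
    (∀ x ∈ LinearMap.ker (LinearMap.mul' k P),
        deltaPP δ ψ x
          ∈ LinearMap.range
              (rTensor C (LinearMap.ker (LinearMap.mul' k P)).subtype)) := by
  obtain ⟨hψ1, hψ2, hψ3, hψ4⟩ := hψ
  obtain ⟨hδ1, hδ2⟩ := hδ
  have hδ1' : ((TensorProduct.rid k P).toLinearMap
      ∘ₗ lTensor P (Coalgebra.counit : C →ₗ[k] k)) ∘ₗ δ = LinearMap.id := by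
    ext p; simpa using hδ1 p
  have hδ2' : rTensor C δ ∘ₗ δ
      = ((TensorProduct.assoc k P C C).symm.toLinearMap
          ∘ₗ lTensor P (Coalgebra.comul : C →ₗ[k] C ⊗[k] C)) ∘ₗ δ := by
    ext p; simpa using hδ2 p
  refine ⟨⟨?_, ?_⟩, ?_⟩
  · -- counit
    intro m
    have := LinearMap.congr_fun (mapC2 ψ hψ4) (rTensor P δ m)
    simp only [coe_comp, LinearEquiv.coe_coe, Function.comp_apply] at this
    rw [deltaPP_eq, coe_comp, Function.comp_apply, this, ← Function.comp_apply
      (f := rTensor P _) (g := rTensor P δ), ← coe_comp, ← rTensor_comp, hδ1',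
      rTensor_id, id_coe, id_eq]
  · -- coassociativity
    intro m
    rw [deltaPP_eq]
    have e1 := LinearMap.congr_fun (natN ψ δ) ((rTensor P δ) m)
    have e2 := LinearMap.congr_fun (mapS ψ hψ3) ((rTensor P δ) m)
    simp only [coe_comp, LinearEquiv.coe_coe, Function.comp_apply] at e1 e2
    have e3 : rTensor P (rTensor C δ) (rTensor P δ m)
        = rTensor P ((TensorProduct.assoc k P C C).symm.toLinearMap
            ∘ₗ lTensor P (Coalgebra.comul : C →ₗ[k] C ⊗[k] C)) (rTensor P δ m) := by
      have h := congrArg (rTensor P) hδ2'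
      rw [rTensor_comp, rTensor_comp] at h
      have := LinearMap.congr_fun h m
      simpa [coe_comp, Function.comp_apply] using this
    calc rTensor C (Theta ψ ∘ₗ rTensor P δ) ((Theta ψ ∘ₗ rTensor P δ) m)
        = rTensor C (Theta ψ) (rTensor C (rTensor P δ) (Theta ψ (rTensor P δ m))) := by
          rw [rTensor_comp]; simp [coe_comp, Function.comp_apply]
      _ = rTensor C (Theta ψ) (Theta' ψ (rTensor P (rTensor C δ) (rTensor P δ m))) := by
          rw [e1]
      _ = rTensor C (Theta ψ) (Theta' ψ (rTensor P
            ((TensorProduct.assoc k P C C).symm.toLinearMap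
              ∘ₗ lTensor P (Coalgebra.comul : C →ₗ[k] C ⊗[k] C)) (rTensor P δ m))) := by
          rw [e3]
      _ = (TensorProduct.assoc k (P ⊗[k] P) C C).symm
            (lTensor (P ⊗[k] P) (Coalgebra.comul : C →ₗ[k] C ⊗[k] C)
              (Theta ψ (rTensor P δ m))) := e2
  · -- restriction to Ω¹P
    intro x hx
    have hmul : rTensor C (LinearMap.mul' k P) ∘ₗ deltaPP δ ψ
        = δ ∘ₗ LinearMap.mul' k P := by
      apply TensorProduct.ext'
      intro m p
      have h := hent m p
      simp only [coe_comp, LinearEquiv.coe_coe, Function.comp_apply] at h ⊢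
      simp only [deltaPP, coe_comp, LinearEquiv.coe_coe, Function.comp_apply,
        rTensor_tmul, mul'_apply]
      rw [← h]
    have hz : rTensor C (LinearMap.mul' k P) (deltaPP δ ψ x) = 0 := by
      have := LinearMap.congr_fun hmul x
      simp only [coe_comp, Function.comp_apply] at this
      rw [this, LinearMap.mem_ker.mp hx, map_zero]
    have hsurj : Function.Surjective (LinearMap.mul' k P) := fun p =>
      ⟨(1 : P) ⊗ₜ[k] p, by simp⟩
    have hex := rTensor_exact (R := k) C
      (LinearMap.exact_subtype_ker_map (LinearMap.mul' k P)) hsurj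
    obtain ⟨y, hy⟩ := (hex (deltaPP δ ψ x)).mp hz
    exact ⟨y, hy⟩


end CGal
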